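/- arXiv:2505.17508 — 2 statements merged into one kernel-verified Lean document; each statement's English description precedes it below -/
import Mathlib

section
/- Unnormalized reverse KL policy gradient identity: with the same setup, define J_URKL(θ) = ∑_x π_θ(x) R(x) − β·(∑_x π_θ(x) log(π_θ(x)/π_old(x)) + ∑_x (π_old(x) − π_θ(x))). Then ∇_θ J_URKL(θ) = ∑_x π_old(x) · w(x) · (R(x) − β log w(x)) · ∇_θ log π_θ(x). -/
/-!
Every term of `J_URKL` has the form `∑ₓ gₓ(π_θ(x))` for a scalar function `gₓ`, so by the chain
rule and the score identity `∇π = π ∇log π` its gradient is `∑ₓ π_θ(x) gₓ'(π_θ(x)) ∇log π_θ(x)`.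
The unnormalized KL integrand `u log(u/c) + (c - u)` has derivative exactly `log(u/c)`: the `+1`
coming from differentiating `u log u` is cancelled by the mass-correction term `c - u`.
-/

theorem hasDerivAt_mul_log_div_add_sub {u c : ℝ} (hu : u ≠ 0) (hc : c ≠ 0) :
    HasDerivAt (fun v => v * Real.log (v / c) + (c - v)) (Real.log (u / c)) u := by
  have hlog : HasDerivAt (fun v => Real.log (v / c)) u⁻¹ u := by
    convert ((hasDerivAt_id' u).div_const c).log (div_ne_zero hu hc) using 1
    field_simp [hu, hc]
  refine (((hasDerivAt_id' u).fun_mul hlog).fun_add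
    ((hasDerivAt_const u c).fun_sub (hasDerivAt_id' u))).congr_deriv ?_
  field_simp
  ring

theorem fderiv_sum_comp_eq_sum_smul_fderiv_log {E ι : Type*} [NormedAddCommGroup E]
    [NormedSpace ℝ E] [Fintype ι] (p : E → ι → ℝ) (g : ι → ℝ → ℝ) (g' : ι → ℝ) (θ : E)
    (hp : ∀ i, DifferentiableAt ℝ (fun θ => p θ i) θ) (hp₀ : ∀ i, p θ i ≠ 0)
    (hg : ∀ i, HasDerivAt (g i) (g' i) (p θ i)) :
    fderiv ℝ (fun θ => ∑ i, g i (p θ i)) θ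
      = ∑ i, (p θ i * g' i) • fderiv ℝ (fun θ => Real.log (p θ i)) θ := by
  have hsum : HasFDerivAt (fun θ => ∑ i, g i (p θ i))
      (∑ i, g' i • fderiv ℝ (fun θ => p θ i) θ) θ :=
    HasFDerivAt.fun_sum fun i _ => (hg i).comp_hasFDerivAt θ (hp i).hasFDerivAt
  rw [hsum.fderiv]
  refine Finset.sum_congr rfl fun i _ => ?_
  rw [((hp i).hasFDerivAt.log (hp₀ i)).fderiv, smul_smul]
  field_simp [hp₀ i]

theorem unnormalized_reverse_KL_policy_gradient_general {d : ℕ} {X : Type*} [Fintype X]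
    (π : EuclideanSpace ℝ (Fin d) → X → ℝ) (pold : X → ℝ) (R : X → ℝ) (β : ℝ)
    (θ₀ : EuclideanSpace ℝ (Fin d))
    (hpold : ∀ x, 0 < pold x)
    (hπpos : ∀ θ x, 0 < π θ x)
    (hπdiff : ∀ x, DifferentiableAt ℝ (fun θ => π θ x) θ₀) :
    fderiv ℝ (fun θ => (∑ x, π θ x * R x)
        - β * ((∑ x, π θ x * Real.log (π θ x / pold x))
              + ∑ x, (pold x - π θ x))) θ₀
      = ∑ x, (pold x * (π θ₀ x / pold x) *
            (R x - β * Real.log (π θ₀ x / pold x))) •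
          fderiv ℝ (fun θ => Real.log (π θ x)) θ₀ := by
  have hJ : (fun θ => (∑ x, π θ x * R x)
        - β * ((∑ x, π θ x * Real.log (π θ x / pold x)) + ∑ x, (pold x - π θ x)))
      = fun θ => ∑ x, (π θ x * R x
          - β * (π θ x * Real.log (π θ x / pold x) + (pold x - π θ x))) := by
    funext θ
    simp only [Finset.sum_sub_distrib, Finset.sum_add_distrib, ← Finset.mul_sum]
  have hg : ∀ x, HasDerivAt (fun v => v * R x - β * (v * Real.log (v / pold x) + (pold x - v)))
      (R x - β * Real.log (π θ₀ x / pold x)) (π θ₀ x) := fun x =>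
    (hasDerivAt_mul_const (R x)).sub
      ((hasDerivAt_mul_log_div_add_sub (hπpos θ₀ x).ne' (hpold x).ne').const_mul β)
  rw [hJ, fderiv_sum_comp_eq_sum_smul_fderiv_log π _ _ θ₀ hπdiff (fun x => (hπpos θ₀ x).ne') hg]
  simp only [mul_div_cancel₀ _ (hpold _).ne']

/-- Unnormalized reverse KL policy gradient identity (finite case):
for `J_URKL(θ) = ∑ π_θ R − β(∑ π_θ log(π_θ/π_old) + ∑ (π_old − π_θ))`,
`∇_θ J_URKL(θ₀) = ∑_x π_old(x) w(x) (R(x) − β log w(x)) ∇_θ log π_θ(x)`. -/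
theorem unnormalized_reverse_KL_policy_gradient {d : ℕ} {X : Type*} [Fintype X]
    (π : EuclideanSpace ℝ (Fin d) → X → ℝ) (pold : X → ℝ) (R : X → ℝ) (β : ℝ)
    (θ₀ : EuclideanSpace ℝ (Fin d))
    (hβ : 0 ≤ β)
    (hpold : ∀ x, 0 < pold x)
    (hπpos : ∀ θ x, 0 < π θ x) (hπsum : ∀ θ, ∑ x, π θ x = 1)
    (hπdiff : ∀ x, DifferentiableAt ℝ (fun θ => π θ x) θ₀) :
    fderiv ℝ (fun θ => (∑ x, π θ x * R x)
        - β * ((∑ x, π θ x * Real.log (π θ x / pold x))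
              + ∑ x, (pold x - π θ x))) θ₀
      = ∑ x, (pold x * (π θ₀ x / pold x) *
            (R x - β * Real.log (π θ₀ x / pold x))) •
          fderiv ℝ (fun θ => Real.log (π θ x)) θ₀ :=
  unnormalized_reverse_KL_policy_gradient_general π pold R β θ₀ hpold hπpos hπdiff
end

section
/- Gradient-equivalence for the unnormalized reverse KL surrogate: with L_URKL(θ) = ∑_x π_old(x) · (−w(x) R(x) + β(w(x) log w(x) − w(x))), it holds that ∇_θ L_URKL(θ) = −∇_θ J_URKL(θ), where J_URKL is the unnormalized reverse KL regularized objective J_URKL(θ) = ∑_x π_θ(x) R(x) − β·(∑_x π_θ(x) log(π_θ(x)/π_old(x)) + ∑_x (π_old(x) − π_θ(x))). -/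
/-!
Multiplying out `π_old · w = π_θ` turns the surrogate into `−J_URKL(θ) − β ∑ₓ π_old(x)`, and the
last term does not depend on `θ`; so the two derivatives differ only by sign.
-/

open Finset

theorem mul_unnormalized_reverse_KL_surrogate_term_eq {p q r β : ℝ} (hp : p ≠ 0) :
    p * (-(q / p) * r + β * (q / p * Real.log (q / p) - q / p))
      = -(q * r) + β * (q * Real.log (q / p)) - β * q := by
  field_simp
  ring

theorem sum_unnormalized_reverse_KL_surrogate_eq {X : Type*} [Fintype X]
    (q pold R : X → ℝ) (β : ℝ) (hpold : ∀ x, pold x ≠ 0) :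
    ∑ x, pold x * (-(q x / pold x) * R x
        + β * (q x / pold x * Real.log (q x / pold x) - q x / pold x))
      = -((∑ x, q x * R x)
          - β * ((∑ x, q x * Real.log (q x / pold x)) + ∑ x, (pold x - q x)))
        + -(β * ∑ x, pold x) := by
  simp only [mul_unnormalized_reverse_KL_surrogate_term_eq (hpold _), sum_add_distrib, sum_sub_distrib,
    sum_neg_distrib, ← mul_sum]
  ring

theorem unnormalized_reverse_KL_surrogate_gradient_equiv_general
    {d : ℕ} {X : Type*} [Fintype X]
    (π : EuclideanSpace ℝ (Fin d) → X → ℝ) (pold : X → ℝ) (R : X → ℝ) (β : ℝ)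
    (θ₀ : EuclideanSpace ℝ (Fin d))
    (hpold : ∀ x, 0 < pold x) :
    fderiv ℝ (fun θ => ∑ x, pold x *
        (-(π θ x / pold x) * R x
          + β * ((π θ x / pold x) * Real.log (π θ x / pold x)
                  - π θ x / pold x))) θ₀
      = -fderiv ℝ (fun θ => (∑ x, π θ x * R x)
          - β * ((∑ x, π θ x * Real.log (π θ x / pold x))
                + ∑ x, (pold x - π θ x))) θ₀ := by
  simp only [sum_unnormalized_reverse_KL_surrogate_eq _ pold R β fun x => (hpold x).ne']
  rw [fderiv_add_const, fderiv_fun_neg]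

/-- Gradient-equivalence of the unnormalized reverse KL surrogate loss:
with `L_URKL(θ) = ∑_x π_old(x)(−w R + β(w log w − w))`,
`∇_θ L_URKL = −∇_θ J_URKL` where
`J_URKL(θ) = ∑ π_θ R − β(∑ π_θ log(π_θ/π_old) + ∑ (π_old − π_θ))`. -/
theorem unnormalized_reverse_KL_surrogate_gradient_equiv
    {d : ℕ} {X : Type*} [Fintype X]
    (π : EuclideanSpace ℝ (Fin d) → X → ℝ) (pold : X → ℝ) (R : X → ℝ) (β : ℝ)
    (θ₀ : EuclideanSpace ℝ (Fin d))
    (hβ : 0 ≤ β)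
    (hpold : ∀ x, 0 < pold x)
    (hπpos : ∀ θ x, 0 < π θ x) (hπsum : ∀ θ, ∑ x, π θ x = 1)
    (hπdiff : ∀ x, DifferentiableAt ℝ (fun θ => π θ x) θ₀) :
    fderiv ℝ (fun θ => ∑ x, pold x *
        (-(π θ x / pold x) * R x
          + β * ((π θ x / pold x) * Real.log (π θ x / pold x)
                  - π θ x / pold x))) θ₀
      = -fderiv ℝ (fun θ => (∑ x, π θ x * R x)
          - β * ((∑ x, π θ x * Real.log (π θ x / pold x))
                + ∑ x, (pold x - π θ x))) θ₀ :=
  unnormalized_reverse_KL_surrogate_gradient_equiv_general π pold R β θ₀ hpold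
end
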